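/- arXiv:2312.11546 — 4 statements merged into one kernel-verified Lean document; each statement's English description precedes it below -/
import Mathlib

section
/- In COT, every class that possesses an ordinal index is bounded: if ι(X) = x for some ordinal x, then X is bounded (has a limit). -/
/-- A two-sorted signature for Class Ordering Theory: `O` is the sort of
ordinals, `C` the sort of (flat, possibly non-extensional) classes of
ordinals, with membership `mem`, the prior relation `prec`, and the (partial)
indexing function `iota` given as a functional relation. -/
structure COT (O : Type*) (C : Type*) where
  mem : O → C → Prop
  prec : C → C → Prop
  iota : C → O → Prop

namespace COT

variable {O C : Type*} (S : COT O C)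

/-- Coextensionality of classes. -/
def equiv (X Y : C) : Prop := ∀ z, S.mem z X ↔ S.mem z Y

/-- `X` is a singleton class of `x`. -/
def isSing (x : O) (X : C) : Prop := ∀ z, S.mem z X ↔ z = x

/-- `x < y` iff `{x} ≺ {y}` (for all classes realizing the singletons). -/
def lt (x y : O) : Prop := ∀ X Y, S.isSing x X → S.isSing y Y → S.prec X Y

/-- `x ≤ y`. -/
def le (x y : O) : Prop := S.lt x y ∨ x = y

/-- `l` is the least ordinal strictly above all elements of `X` (the limit of `X`). -/
def isLim (X : C) (l : O) : Prop :=
  (∀ x, S.mem x X → S.lt x l) ∧ ∀ l', (∀ x, S.mem x X → S.lt x l') → S.le l l'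

/-- `X` is bounded: it has a limit. -/
def bnd (X : C) : Prop := ∃ l, S.isLim X l

/-- `Y` is a subclass of `X`. -/
def subclass (Y X : C) : Prop := ∀ z, S.mem z Y → S.mem z X

/-- Equinumerosity: there is a class bijection between `X` and `Y`. -/
def equinum (X Y : C) : Prop :=
  ∃ R : O → O → Prop, (∀ a b, R a b → S.mem a X ∧ S.mem b Y) ∧
    (∀ a, S.mem a X → ∃! b, R a b) ∧ (∀ b, S.mem b Y → ∃! a, R a b)

/-- `i = lim {ι(Y) : Y ≺ X}`: `i` is the least ordinal strictly above all
indices of classes prior to `X`. -/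
def indexSpec (X : C) (i : O) : Prop :=
  (∀ Y j, S.prec Y X → S.iota Y j → S.lt j i) ∧
    ∀ i', (∀ Y j, S.prec Y X → S.iota Y j → S.lt j i') → S.le i i'

/-- The interpreted set membership: `y ∈* x` iff `y ε ι⁻¹(x)`. -/
def memStar (y x : O) : Prop := ∃ X, S.mem y X ∧ S.iota X x

/-- The axioms of COT. -/
structure Axioms : Prop where
  /-- Comprehension. -/
  comp : ∀ P : O → Prop, ∃ X, ∀ x, S.mem x X ↔ P x
  /-- `≺` is transitive. -/
  prec_trans : ∀ X Y Z, S.prec X Y → S.prec Y Z → S.prec X Z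
  /-- `≺` is co-connected. -/
  coConnected : ∀ X Y, ¬ S.equiv X Y ↔ (S.prec X Y ∨ S.prec Y X)
  /-- `≺` is well-founded (schema). -/
  wf : ∀ P : C → Prop, (∃ X, P X) → ∃ M, P M ∧ ∀ Y, P Y → ¬ S.prec Y M
  /-- Respective: `lim X ≤ y ε Y → X ≺ Y`. -/
  respective : ∀ X Y l y, S.isLim X l → S.le l y → S.mem y Y → S.prec X Y
  /-- `ι` is a partial function. -/
  iota_fun : ∀ X i j, S.iota X i → S.iota X j → i = j
  /-- Indexing: every bounded class has an index. -/
  indexing : ∀ X, S.bnd X → ∃ i, S.iota X i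
  /-- The index satisfies `ι(X) = lim {ι(Y) : Y ≺ X}`. -/
  iota_spec : ∀ X i, S.iota X i → S.indexSpec X i
  /-- Infinity: there is a nonzero ordinal closed under successor from below. -/
  infinity : ∃ l : O, (∃ k, S.lt k l) ∧ ∀ x, S.lt x l → ∃ y, S.lt x y ∧ S.lt y l
  /-- Boundedness: a class equinumerous with a bounded class is bounded. -/
  boundedness : ∀ X Y, S.bnd X → S.equinum X Y → S.bnd Y

end COT

namespace COT

variable {O C : Type*} {S : COT O C}

lemma aux_not_prec_self (hS : S.Axioms) (X : C) : ¬ S.prec X X := fun h =>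
  (hS.coConnected X X).mpr (Or.inl h) (fun _ => Iff.rfl)

lemma aux_prec_congr_left (hS : S.Axioms) {X X' Y : C}
    (e : S.equiv X X') (h : S.prec X Y) : S.prec X' Y := by
  have hne : ¬ S.equiv X' Y := fun hE =>
    (hS.coConnected X Y).mpr (Or.inl h) (fun z => (e z).trans (hE z))
  rcases (hS.coConnected X' Y).mp hne with h' | h'
  · exact h'
  · exact absurd e ((hS.coConnected X X').mpr (Or.inl (hS.prec_trans X Y X' h h')))

lemma aux_prec_congr_right (hS : S.Axioms) {X Y Y' : C}
    (e : S.equiv Y Y') (h : S.prec X Y) : S.prec X Y' := by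
  have hne : ¬ S.equiv X Y' := fun hE =>
    (hS.coConnected X Y).mpr (Or.inl h) (fun z => (hE z).trans ((e z).symm))
  rcases (hS.coConnected X Y').mp hne with h' | h'
  · exact h'
  · exact absurd e ((hS.coConnected Y Y').mpr (Or.inr (hS.prec_trans Y' X Y h' h)))

lemma aux_lt_of_prec (hS : S.Axioms) {a b : O} {A B : C}
    (hA : S.isSing a A) (hB : S.isSing b B) (h : S.prec A B) : S.lt a b := by
  intro X Y hX hY
  have e1 : S.equiv A X := fun z => (hA z).trans ((hX z).symm)
  have e2 : S.equiv B Y := fun z => (hB z).trans ((hY z).symm)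
  exact aux_prec_congr_right hS e2 (aux_prec_congr_left hS e1 h)

lemma aux_lt_irrefl (hS : S.Axioms) (a : O) : ¬ S.lt a a := by
  intro h
  obtain ⟨A, hA⟩ := hS.comp (fun z => z = a)
  exact aux_not_prec_self hS A (h A A hA hA)

lemma aux_trichotomy (hS : S.Axioms) {a b : O} (hne : a ≠ b) :
    S.lt a b ∨ S.lt b a := by
  obtain ⟨A, hA⟩ := hS.comp (fun z => z = a)
  obtain ⟨B, hB⟩ := hS.comp (fun z => z = b)
  have hneq : ¬ S.equiv A B := fun e =>
    hne ((hB a).mp ((e a).mp ((hA a).mpr rfl)))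
  rcases (hS.coConnected A B).mp hneq with h | h
  · exact Or.inl (aux_lt_of_prec hS hA hB h)
  · exact Or.inr (aux_lt_of_prec hS hB hA h)

/-- Well-foundedness of `<` on ordinals, derived from that of `≺`. -/
lemma aux_lt_wf (hS : S.Axioms) (P : O → Prop) (h : ∃ a, P a) :
    ∃ m, P m ∧ ∀ y, P y → ¬ S.lt y m := by
  obtain ⟨a, ha⟩ := h
  obtain ⟨A, hA⟩ := hS.comp (fun z => z = a)
  obtain ⟨M, ⟨m, hM, hPm⟩, hmin⟩ :=
    hS.wf (fun Z => ∃ z, S.isSing z Z ∧ P z) ⟨A, a, hA, ha⟩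
  refine ⟨m, hPm, fun y hy hlt => ?_⟩
  obtain ⟨Y, hY⟩ := hS.comp (fun z => z = y)
  exact hmin Y ⟨y, hY, hy⟩ (hlt Y M hY hM)

/-- The initial segment `{y : y < a}` as a class. -/
noncomputable def auxSeg (hS : S.Axioms) (a : O) : C :=
  Classical.choose (hS.comp (fun y => S.lt y a))

lemma aux_mem_seg (hS : S.Axioms) (a y : O) :
    S.mem y (auxSeg hS a) ↔ S.lt y a :=
  Classical.choose_spec (hS.comp (fun y => S.lt y a)) y

lemma aux_isLim_seg (hS : S.Axioms) (a : O) : S.isLim (auxSeg hS a) a := by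
  refine ⟨fun y hy => (aux_mem_seg hS a y).mp hy, fun l' hl' => ?_⟩
  by_cases h : a = l'
  · exact Or.inr h
  · rcases aux_trichotomy hS h with h' | h'
    · exact Or.inl h'
    · exact absurd (hl' l' ((aux_mem_seg hS a l').mpr h'))
        (aux_lt_irrefl hS l')

/-- Key lemma: the index of an initial segment `{y : y < a}` is not below `a`. -/
lemma aux_seg_index_ge (hS : S.Axioms) (a j : O)
    (hj : S.iota (auxSeg hS a) j) : ¬ S.lt j a := by
  intro hbad
  obtain ⟨m, ⟨k, hk, hkm⟩, hmin⟩ :=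
    aux_lt_wf hS (fun b => ∃ i, S.iota (auxSeg hS b) i ∧ S.lt i b) ⟨a, j, hj, hbad⟩
  have hprec : S.prec (auxSeg hS k) (auxSeg hS m) :=
    hS.respective (auxSeg hS k) (auxSeg hS m) k k (aux_isLim_seg hS k)
      (Or.inr rfl) ((aux_mem_seg hS m k).mpr hkm)
  obtain ⟨k', hk'⟩ := hS.indexing (auxSeg hS k) ⟨k, aux_isLim_seg hS k⟩
  have hk'k : S.lt k' k := (hS.iota_spec (auxSeg hS m) k hk).1 _ k' hprec hk'
  exact hmin k ⟨k', hk', hk'k⟩ hkm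

end COT

/-- Proposition I of COT: every indexed class is bounded. -/
theorem COT.bnd_of_indexed {O C : Type*} (S : COT O C) (hS : S.Axioms) :
    ∀ (X : C) (x : O), S.iota X x → S.bnd X := by
  intro X x hx
  by_contra hub
  -- Since X is unbounded, some element of X is ≥ x.
  have hy : ∃ y, S.mem y X ∧ S.le x y := by
    by_contra h
    push_neg at h
    have hsub : ∀ y, S.mem y X → S.lt y x := by
      intro y hyX
      by_cases he : x = y
      · exact absurd (Or.inr he) (h y hyX)
      rcases aux_trichotomy hS he with h' | h'
      · exact absurd (Or.inl h') (h y hyX)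
      · exact h'
    obtain ⟨m, hm, hmin⟩ :=
      aux_lt_wf hS (fun l => ∀ y, S.mem y X → S.lt y l) ⟨x, hsub⟩
    refine hub ⟨m, hm, fun l' hl' => ?_⟩
    by_cases he : m = l'
    · exact Or.inr he
    rcases aux_trichotomy hS he with h' | h'
    · exact Or.inl h'
    · exact absurd h' (hmin l' hl')
  obtain ⟨y, hyX, hxy⟩ := hy
  have hprec : S.prec (COT.auxSeg hS x) X :=
    hS.respective (COT.auxSeg hS x) X x y (COT.aux_isLim_seg hS x) hxy hyX
  obtain ⟨j, hj⟩ := hS.indexing (COT.auxSeg hS x) ⟨x, COT.aux_isLim_seg hS x⟩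
  exact COT.aux_seg_index_ge hS x j hj ((hS.iota_spec X x hx).1 _ j hprec hj)
end

section
/- In COT, the index of a class is strictly greater than each of its elements: if y ε X and ι(X) is defined, then y < ι(X). -/
section CotHelpers

variable {O C : Type*} (S : COT O C) (hS : S.Axioms)
include hS

lemma cot_sing_exists (x : O) : ∃ X, S.isSing x X := by
  obtain ⟨X, hX⟩ := hS.comp (· = x)
  exact ⟨X, hX⟩

omit hS in
lemma cot_equiv_refl (X : C) : S.equiv X X := fun _ => Iff.rfl

lemma cot_not_equiv_of_prec {X Y : C} (h : S.prec X Y) : ¬ S.equiv X Y :=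
  (hS.coConnected X Y).mpr (Or.inl h)

lemma cot_prec_irrefl (X : C) : ¬ S.prec X X := fun h =>
  cot_not_equiv_of_prec S hS h (cot_equiv_refl S X)

lemma cot_prec_congr_left {X X' Y : C} (e : S.equiv X X') (h : S.prec X Y) :
    S.prec X' Y := by
  by_contra h'
  by_cases he : S.equiv X' Y
  · exact cot_not_equiv_of_prec S hS h (fun z => (e z).trans (he z))
  · rcases (hS.coConnected X' Y).mp he with h2 | h2
    · exact h' h2
    · exact cot_not_equiv_of_prec S hS (hS.prec_trans X Y X' h h2) e

lemma cot_prec_congr_right {X Y Y' : C} (e : S.equiv Y Y') (h : S.prec X Y) :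
    S.prec X Y' := by
  by_contra h'
  by_cases he : S.equiv X Y'
  · exact cot_not_equiv_of_prec S hS h (fun z => (he z).trans ((e z).symm))
  · rcases (hS.coConnected X Y').mp he with h2 | h2
    · exact h' h2
    · exact cot_not_equiv_of_prec S hS (hS.prec_trans Y' X Y h2 h) (fun z => (e z).symm)

lemma cot_lt_irrefl (x : O) : ¬ S.lt x x := by
  intro h
  obtain ⟨X, hX⟩ := cot_sing_exists S hS x
  exact cot_prec_irrefl S hS X (h X X hX hX)

lemma cot_lt_connex {x y : O} (hne : x ≠ y) (h : ¬ S.lt x y) : S.lt y x := by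
  obtain ⟨X, hX⟩ := cot_sing_exists S hS x
  obtain ⟨Y, hY⟩ := cot_sing_exists S hS y
  have hne' : ¬ S.equiv X Y := fun he =>
    hne ((hY x).mp ((he x).mp ((hX x).mpr rfl)))
  have hp : S.prec Y X := by
    rcases (hS.coConnected X Y).mp hne' with h1 | h1
    · exfalso
      apply h
      intro X' Y' hX' hY'
      have e1 : S.equiv X X' := fun z => (hX z).trans ((hX' z).symm)
      have e2 : S.equiv Y Y' := fun z => (hY z).trans ((hY' z).symm)
      exact cot_prec_congr_right S hS e2 (cot_prec_congr_left S hS e1 h1)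
    · exact h1
  intro Y' X' hY' hX'
  have e1 : S.equiv Y Y' := fun z => (hY z).trans ((hY' z).symm)
  have e2 : S.equiv X X' := fun z => (hX z).trans ((hX' z).symm)
  exact cot_prec_congr_right S hS e2 (cot_prec_congr_left S hS e1 hp)

/-- A well-founded minimal element for any nonempty property of ordinals. -/
lemma cot_lt_wf (P : O → Prop) (hne : ∃ x, P x) :
    ∃ m, P m ∧ ∀ j, P j → ¬ S.lt j m := by
  obtain ⟨x0, hx0⟩ := hne
  obtain ⟨X0, hX0⟩ := cot_sing_exists S hS x0
  obtain ⟨M, ⟨m, hm, hMm⟩, hmin⟩ :=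
    hS.wf (fun X => ∃ x, P x ∧ S.isSing x X) ⟨X0, x0, hx0, hX0⟩
  refine ⟨m, hm, fun j hj hlt => ?_⟩
  obtain ⟨J, hJ⟩ := cot_sing_exists S hS j
  exact hmin J ⟨j, hj, hJ⟩ (hlt J M hJ hMm)

end CotHelpers

/-- Lemma III of COT: the index of a class is strictly greater than each of
its elements. -/
theorem COT.lt_index_of_mem {O C : Type*} (S : COT O C) (hS : S.Axioms) :
    ∀ (X : C) (i y : O), S.iota X i → S.mem y X → S.lt y i := by
  by_contra hcon
  push_neg at hcon
  obtain ⟨X0, i0, y0, h1, h2, h3⟩ := hcon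
  -- take a minimal bad index m
  obtain ⟨m, ⟨X, y, hiota, hmem, hlt⟩, hmin⟩ :=
    cot_lt_wf S hS (fun i => ∃ X y, S.iota X i ∧ S.mem y X ∧ ¬ S.lt y i)
      ⟨i0, X0, y0, h1, h2, h3⟩
  -- m ≤ y
  have hle : S.le m y := by
    by_cases hey : y = m
    · exact Or.inr hey.symm
    · exact Or.inl (cot_lt_connex S hS hey hlt)
  -- Z = {x : x < m}
  obtain ⟨Z, hZ⟩ := hS.comp (fun x => S.lt x m)
  have hLim : S.isLim Z m := by
    constructor
    · exact fun x hx => (hZ x).mp hx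
    · intro l' hl'
      by_cases hml : m = l'
      · exact Or.inr hml
      · by_cases hlt' : S.lt m l'
        · exact Or.inl hlt'
        · exfalso
          have : S.lt l' m := cot_lt_connex S hS hml hlt'
          exact cot_lt_irrefl S hS l' (hl' l' ((hZ l').mpr this))
  have hprec : S.prec Z X := hS.respective Z X m y hLim hle hmem
  obtain ⟨k, hk⟩ := hS.indexing Z ⟨m, hLim⟩
  have hkm : S.lt k m := (hS.iota_spec X m hiota).1 Z k hprec hk
  have hkZ : S.mem k Z := (hZ k).mpr hkm
  exact hmin k ⟨Z, k, hk, hkZ, cot_lt_irrefl S hS k⟩ hkm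
end

section
/- Define y ∈* x iff ∃X: y ε X ∧ x = ι(X). Then Union holds for ∈*: for every ordinal a there is an ordinal x such that y ∈* x iff ∃z ∈* a with y ∈* z. -/
namespace COT

variable {O C : Type*} (S : COT O C)

section Aux

variable {O C : Type*} {S : COT O C} (hS : S.Axioms)

lemma equiv_refl' (X : C) : S.equiv X X := fun _ => Iff.rfl

lemma equiv_symm' {X Y : C} (h : S.equiv X Y) : S.equiv Y X := fun z => (h z).symm

lemma equiv_trans' {X Y Z : C} (h : S.equiv X Y) (h' : S.equiv Y Z) : S.equiv X Z :=
  fun z => (h z).trans (h' z)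

lemma sing_eq' {x y : O} {X Y : C} (hX : S.isSing x X) (hY : S.isSing y Y)
    (h : S.equiv X Y) : x = y := (hY x).mp ((h x).mp ((hX x).mpr rfl))

include hS

lemma exists_sing' (x : O) : ∃ X, S.isSing x X := hS.comp (· = x)

lemma not_prec_self' (X : C) : ¬ S.prec X X := fun h =>
  (hS.coConnected X X).mpr (Or.inl h) (equiv_refl' X)

lemma not_prec_of_equiv' {X Y : C} (h : S.equiv X Y) : ¬ S.prec X Y := fun hp =>
  (hS.coConnected X Y).mpr (Or.inl hp) h

/-- `prec` is invariant under coextensionality. -/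
lemma prec_congr' {X X' Y Y' : C} (hX : S.equiv X X') (hY : S.equiv Y Y')
    (h : S.prec X Y) : S.prec X' Y' := by
  have hne : ¬ S.equiv X' Y' := fun he =>
    not_prec_of_equiv' hS (equiv_trans' (equiv_trans' hX he) (equiv_symm' hY)) h
  rcases (hS.coConnected X' Y').mp hne with h1 | h1
  · exact h1
  · -- prec Y' X' : derive a contradiction
    exfalso
    have hne2 : ¬ S.equiv X Y' := fun he =>
      not_prec_of_equiv' hS (equiv_trans' he (equiv_symm' hY)) h
    rcases (hS.coConnected X Y').mp hne2 with h2 | h2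
    · exact not_prec_of_equiv' hS hX (hS.prec_trans _ _ _ h2 h1)
    · exact not_prec_of_equiv' hS (equiv_symm' hY) (hS.prec_trans _ _ _ h2 h)

lemma lt_of_sing_prec' {x y : O} {X Y : C} (hX : S.isSing x X) (hY : S.isSing y Y)
    (h : S.prec X Y) : S.lt x y := fun X' Y' hX' hY' =>
  prec_congr' hS (fun z => (hX z).trans ((hX' z).symm)) (fun z => (hY z).trans ((hY' z).symm)) h

lemma lt_irrefl' (x : O) : ¬ S.lt x x := fun h => by
  obtain ⟨X, hX⟩ := exists_sing' hS x
  exact not_prec_self' hS X (h X X hX hX)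

lemma lt_trans' {x y z : O} (h : S.lt x y) (h' : S.lt y z) : S.lt x z := by
  intro X Z hX hZ
  obtain ⟨Y, hY⟩ := exists_sing' hS y
  exact hS.prec_trans _ _ _ (h X Y hX hY) (h' Y Z hY hZ)

lemma lt_trichotomy' (x y : O) : S.lt x y ∨ x = y ∨ S.lt y x := by
  obtain ⟨X, hX⟩ := exists_sing' hS x
  obtain ⟨Y, hY⟩ := exists_sing' hS y
  by_cases h : S.equiv X Y
  · exact Or.inr (Or.inl (sing_eq' hX hY h))
  · rcases (hS.coConnected X Y).mp h with h1 | h1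
    · exact Or.inl (lt_of_sing_prec' hS hX hY h1)
    · exact Or.inr (Or.inr (lt_of_sing_prec' hS hY hX h1))

lemma lt_of_le_of_lt' {x y z : O} (h : S.le x y) (h' : S.lt y z) : S.lt x z := by
  rcases h with h | rfl
  · exact lt_trans' hS h h'
  · exact h'

lemma lt_of_lt_of_le' {x y z : O} (h : S.lt x y) (h' : S.le y z) : S.lt x z := by
  rcases h' with h' | rfl
  · exact lt_trans' hS h h'
  · exact h

/-- Well-founded minimum for ordinals w.r.t. `lt`. -/
lemma exists_min' (Q : O → Prop) (h : ∃ x, Q x) :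
    ∃ m, Q m ∧ ∀ y, Q y → ¬ S.lt y m := by
  obtain ⟨x, hx⟩ := h
  obtain ⟨Sx, hSx⟩ := exists_sing' hS x
  obtain ⟨M, ⟨m, hM, hQm⟩, hmin⟩ :=
    hS.wf (fun L => ∃ l, S.isSing l L ∧ Q l) ⟨Sx, x, hSx, hx⟩
  refine ⟨m, hQm, fun y hy hlt => ?_⟩
  obtain ⟨Sy, hSy⟩ := exists_sing' hS y
  exact hmin Sy ⟨y, hSy, hy⟩ (hlt Sy M hSy hM)

/-- A class with a strict upper bound is bounded. -/
lemma bnd_of_ub' {X : C} {b : O} (hb : ∀ x, S.mem x X → S.lt x b) : S.bnd X := by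
  obtain ⟨m, hQm, hmin⟩ := exists_min' hS (fun l => ∀ x, S.mem x X → S.lt x l) ⟨b, hb⟩
  refine ⟨m, hQm, fun l' hl' => ?_⟩
  rcases lt_trichotomy' hS m l' with h | h | h
  · exact Or.inl h
  · exact Or.inr h
  · exact absurd h (hmin l' hl')

/-- The initial segment below `y` has limit `y`. -/
lemma isLim_seg' {y : O} {X : C} (hX : ∀ z, S.mem z X ↔ S.lt z y) : S.isLim X y := by
  refine ⟨fun x hx => (hX x).mp hx, fun l' hl' => ?_⟩
  rcases lt_trichotomy' hS y l' with h | h | h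
  · exact Or.inl h
  · exact Or.inr h
  · exact absurd (hl' l' ((hX l').mpr h)) (lt_irrefl' hS l')

/-- The index of the initial segment below `y` is at least `y`. -/
lemma le_iota_seg' : ∀ (y : O) (X : C) (j : O),
    (∀ z, S.mem z X ↔ S.lt z y) → S.iota X j → S.le y j := by
  by_contra hcon
  push_neg at hcon
  obtain ⟨m, ⟨Xm, j, hXm, hj, hnle⟩, hmin⟩ :=
    exists_min' hS (fun y => ∃ (X : C) (j : O),
      (∀ z, S.mem z X ↔ S.lt z y) ∧ S.iota X j ∧ ¬ S.le y j) (by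
        obtain ⟨y, X, j, h1, h2, h3⟩ := hcon
        exact ⟨y, X, j, h1, h2, h3⟩)
  have hjm : S.lt j m := by
    rcases lt_trichotomy' hS m j with h | h | h
    · exact absurd (Or.inl h) hnle
    · exact absurd (Or.inr h) hnle
    · exact h
  -- every z < m satisfies lt z j, in particular z = j, contradiction
  have key : ∀ z, S.lt z m → S.lt z j := by
    intro z hz
    obtain ⟨Xz, hXz⟩ := hS.comp (fun w => S.lt w z)
    have hlim : S.isLim Xz z := isLim_seg' hS hXz
    obtain ⟨iz, hiz⟩ := hS.indexing Xz ⟨z, hlim⟩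
    have hprec : S.prec Xz Xm :=
      hS.respective Xz Xm z z hlim (Or.inr rfl) ((hXm z).mpr hz)
    have h1 : S.lt iz j := (hS.iota_spec Xm j hj).1 Xz iz hprec hiz
    have h2 : S.le z iz := by
      by_contra hzle
      exact hmin z ⟨Xz, iz, hXz, hiz, hzle⟩ hz
    exact lt_of_le_of_lt' hS h2 h1
  exact lt_irrefl' hS j (key j hjm)

/-- Lemma III: elements of `∈*` are `<`-smaller. -/
lemma lt_of_memStar' {y a : O} (h : S.memStar y a) : S.lt y a := by
  obtain ⟨A, hyA, hA⟩ := h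
  obtain ⟨Xy, hXy⟩ := hS.comp (fun z => S.lt z y)
  have hlim : S.isLim Xy y := isLim_seg' hS hXy
  have hprec : S.prec Xy A := hS.respective Xy A y y hlim (Or.inr rfl) hyA
  obtain ⟨j, hj⟩ := hS.indexing Xy ⟨y, hlim⟩
  have h1 : S.lt j a := (hS.iota_spec A a hA).1 Xy j hprec hj
  have h2 : S.le y j := le_iota_seg' hS y Xy j hXy hj
  exact lt_of_le_of_lt' hS h2 h1

end Aux

end COT

/-- Union for the interpreted membership `∈*` in COT. -/
theorem COT.memStar_union {O C : Type*} (S : COT O C) (hS : S.Axioms) :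
    ∀ a : O, ∃ x : O, ∀ y, S.memStar y x ↔ ∃ z, S.memStar z a ∧ S.memStar y z := by
  intro a
  obtain ⟨U, hU⟩ := hS.comp (fun y => ∃ z, S.memStar z a ∧ S.memStar y z)
  have hbnd : S.bnd U := bnd_of_ub' hS (fun y hy => by
    obtain ⟨z, hz, hyz⟩ := (hU y).mp hy
    exact lt_trans' hS (lt_of_memStar' hS hyz) (lt_of_memStar' hS hz))
  obtain ⟨x, hx⟩ := hS.indexing U hbnd
  refine ⟨x, fun y => ⟨?_, fun ⟨z, hz⟩ => ⟨U, (hU y).mpr ⟨z, hz⟩, hx⟩⟩⟩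
  rintro ⟨Y, hyY, hY⟩
  have heq : S.equiv Y U := by
    by_contra hne
    rcases (hS.coConnected Y U).mp hne with h | h
    · exact lt_irrefl' hS x ((hS.iota_spec U x hx).1 Y x h hY)
    · exact lt_irrefl' hS x ((hS.iota_spec Y x hY).1 U x h hx)
  exact (hU y).mp ((heq y).mp hyY)
end

section
/- For the rank-respective well-order ≺ on P(Ord∩L_κ) and classes* X, Y: if lim* X ≤ y and y ∈* Y (i.e., some ∈*-element of Y is at least the least strict upper bound of X), then X ≺* Y, where X ≺* Y iff η(X) ≺ η(Y). That is, the Respective axiom of COT holds in this model. -/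
open ZFSet

/-- `Ω = {{0}}`. -/
noncomputable def Omega : ZFSet := {({(∅ : ZFSet)} : ZFSet)}

/-- `X` is a class*: `Ω ∈ X` and every other element of `X` is an ordinal. -/
def IsClassStar (X : ZFSet) : Prop :=
  Omega ∈ X ∧ ∀ Y ∈ X, Y ≠ Omega → Y.IsOrdinal

/-- `Z ∈* X` iff `X` is a class*, `Z ∈ X` and `Z ≠ Ω`. -/
def MemStar (Z X : ZFSet) : Prop := IsClassStar X ∧ Z ∈ X ∧ Z ≠ Omega

/-- `η(X) = {Z : Z ∈* X}`. -/
noncomputable def eta (X : ZFSet) : ZFSet := ZFSet.sep (fun Z => MemStar Z X) X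

/-- The Respective axiom holds in the model: given a rank-respective
well-order `≺` on sets, classes* `X, Y`, `l` the least ordinal strictly above
all `∈*`-elements of `X` (i.e. `l = lim* X`), and `y` an `∈*`-element of `Y`
with `l ≤ y`, we get `η X ≺ η Y`, i.e. `X ≺* Y`. -/
theorem respective_in_model (prec : ZFSet → ZFSet → Prop)
    [IsWellOrder ZFSet prec]
    (hrr : ∀ A B : ZFSet, A.rank < B.rank → prec A B)
    (X Y : ZFSet) (hX : IsClassStar X) (hY : IsClassStar Y)
    (l : ZFSet) (hl : l.IsOrdinal)
    (hub : ∀ z, MemStar z X → z ∈ l)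
    (hleast : ∀ l' : ZFSet, l'.IsOrdinal → (∀ z, MemStar z X → z ∈ l') →
      l = l' ∨ l ∈ l')
    (y : ZFSet) (hy : MemStar y Y) (hly : l = y ∨ l ∈ y) :
    prec (eta X) (eta Y) := by
  have hyY : y ∈ eta Y := by
    rw [eta, ZFSet.mem_sep]
    exact ⟨hy.2.1, hy⟩
  have hyOrd : y.IsOrdinal := hY.2 y hy.2.1 hy.2.2
  have hlsub : l ⊆ y := by
    rcases hly with rfl | h
    · exact fun _ h => h
    · exact hyOrd.isTransitive.subset_of_mem h
  apply hrr
  have h1 : (eta X).rank ≤ y.rank := by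
    rw [ZFSet.rank_le_iff]
    intro z hz
    rw [eta, ZFSet.mem_sep] at hz
    exact ZFSet.rank_lt_of_mem (hlsub (hub z hz.2))
  exact h1.trans_lt (ZFSet.rank_lt_of_mem hyY)
end
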